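/- Every square-stable graph is α⁺-stable; moreover, the intersection of all maximum stable sets of a square-stable graph is empty (i.e., it is α₀⁺-stable). -/

import Mathlib

open SimpleGraph

attribute [local instance] Classical.propDecidable

variable {V : Type*}

/-- A stable (independent) set: pairwise non-adjacent vertices. -/
def IsStable (G : SimpleGraph V) (S : Finset V) : Prop :=
  ∀ ⦃a⦄, a ∈ S → ∀ ⦃b⦄, b ∈ S → ¬ G.Adj a b

/-- The stability (independence) number α(G). -/
noncomputable def alpha [Fintype V] (G : SimpleGraph V) : ℕ :=
  (Finset.univ.powerset.filter (fun S => IsStable G S)).sup Finset.card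

/-- A maximum stable set, i.e. a member of Ω(G). -/
def IsMaxStable [Fintype V] (G : SimpleGraph V) (S : Finset V) : Prop :=
  IsStable G S ∧ S.card = alpha G

/-- The square G² of a graph: distinct vertices adjacent iff at distance ≤ 2. -/
def square (G : SimpleGraph V) : SimpleGraph V where
  Adj u v := u ≠ v ∧ (G.Adj u v ∨ ∃ w, G.Adj u w ∧ G.Adj w v)
  symm := by
    constructor
    rintro u v ⟨h, h2⟩
    refine ⟨h.symm, ?_⟩
    rcases h2 with h2 | ⟨w, hw1, hw2⟩
    · exact Or.inl h2.symm
    · exact Or.inr ⟨w, hw2.symm, hw1.symm⟩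
  loopless := by constructor; rintro u ⟨h, _⟩; exact h rfl

/-- G is α-square-stable if α(G) = α(G²). -/
def SquareStable [Fintype V] (G : SimpleGraph V) : Prop :=
  alpha G = alpha (square G)

/-- The maximum matching size μ(G). -/
noncomputable def mu [Fintype V] (G : SimpleGraph V) : ℕ :=
  sSup {n | ∃ M : G.Subgraph, M.IsMatching ∧ M.verts.ncard = 2 * n}

/-- f realizes a matching of A into S: it sends each a ∈ A to a distinct
neighbour in S (so the corresponding edges form a matching ⊆ (A,S) saturating A). -/
def MatchedInto (G : SimpleGraph V) (A S : Finset V) (f : V → V) : Prop :=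
  (∀ a ∈ A, f a ∈ S ∧ G.Adj a (f a)) ∧ ∀ a ∈ A, ∀ b ∈ A, f a = f b → a = b

/-- Well-covered: no isolated vertices, and every maximal stable set is maximum. -/
def WellCovered [Fintype V] (G : SimpleGraph V) : Prop :=
  (∀ v : V, ∃ w, G.Adj v w) ∧
    ∀ S : Finset V, IsStable G S → (∀ T : Finset V, IsStable G T → S ⊆ T → S = T) →
      S.card = alpha G

/-- Very well-covered: well-covered and |V(G)| = 2α(G). -/
def VeryWellCovered [Fintype V] (G : SimpleGraph V) : Prop :=
  WellCovered G ∧ Fintype.card V = 2 * alpha G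

/-- The set of pendant (degree-one) vertices of G. -/
noncomputable def pendants [Fintype V] (G : SimpleGraph V) : Finset V :=
  Finset.univ.filter (fun v => G.degree v = 1)

/-- G has a perfect matching consisting of pendant edges. -/
def HasPendantPerfectMatching [Fintype V] (G : SimpleGraph V) : Prop :=
  ∃ M : G.Subgraph, M.IsPerfectMatching ∧
    ∀ a b : V, M.Adj a b → G.degree a = 1 ∨ G.degree b = 1

/-- The star K_{1,n}: vertex 0 is the center, adjacent to n leaves. -/
def starGraph (n : ℕ) : SimpleGraph (Fin (n + 1)) where
  Adj u v := u ≠ v ∧ (u = 0 ∨ v = 0)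
  symm := by constructor; rintro u v ⟨h1, h2⟩; exact ⟨h1.symm, h2.symm⟩
  loopless := by constructor; rintro u ⟨h, _⟩; exact h rfl


/-! A maximum stable set `S` of `G²` is pairwise at distance at least 3 in `G`, and by
square-stability it is also maximum in `G`. Trading a vertex `v ∈ S` for a neighbour `w` keeps
it stable in `G`, since `w` is adjacent neither to `v` nor (distance ≥ 3) to the rest of `S`.
So, without isolated vertices, every vertex misses some maximum stable set of `G`, and a
maximum stable set missing `u` stays stable when any edge at `u` is added. -/

lemma le_square (G : SimpleGraph V) : G ≤ square G :=
  fun _ _ hab => ⟨hab.ne, Or.inl hab⟩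

lemma IsStable.anti {G H : SimpleGraph V} (hGH : G ≤ H) {S : Finset V} (hS : IsStable H S) :
    IsStable G S :=
  fun _ ha _ hb hadj => hS ha hb (hGH hadj)

lemma IsStable.insert_erase_of_adj {G : SimpleGraph V} {S : Finset V}
    (hS : IsStable (square G) S) {v w : V} (hv : v ∈ S) (hvw : G.Adj v w) :
    IsStable G (insert w (S.erase v)) := by
  intro a ha b hb hab
  rcases Finset.mem_insert.mp ha with rfl | ha' <;>
    rcases Finset.mem_insert.mp hb with rfl | hb'
  · exact hab.ne rfl
  · exact hS hv (Finset.mem_of_mem_erase hb')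
      ⟨(Finset.ne_of_mem_erase hb').symm, Or.inr ⟨a, hvw, hab⟩⟩
  · exact hS (Finset.mem_of_mem_erase ha') hv
      ⟨Finset.ne_of_mem_erase ha', Or.inr ⟨b, hab, hvw.symm⟩⟩
  · exact hS (Finset.mem_of_mem_erase ha') (Finset.mem_of_mem_erase hb') (le_square G hab)

section Fintype

variable [Fintype V] {G H : SimpleGraph V}

lemma IsStable.card_le_alpha {S : Finset V} (hS : IsStable G S) : S.card ≤ alpha G :=
  Finset.le_sup (by simp [hS])

lemma alpha_anti (hGH : G ≤ H) : alpha H ≤ alpha G :=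
  Finset.sup_le fun _ hS => ((Finset.mem_filter.mp hS).2.anti hGH).card_le_alpha

lemma exists_isMaxStable (G : SimpleGraph V) : ∃ S : Finset V, IsMaxStable G S := by
  obtain ⟨S, hS, hsup⟩ := Finset.exists_mem_eq_sup
    (Finset.univ.powerset.filter (fun S => IsStable G S)) ⟨∅, by simp [IsStable]⟩ Finset.card
  exact ⟨S, (Finset.mem_filter.mp hS).2, hsup.symm⟩

lemma SquareStable.exists_isMaxStable_notMem (hsq : SquareStable G)
    (hG : ∀ v, ∃ w, G.Adj v w) (v : V) : ∃ S : Finset V, IsMaxStable G S ∧ v ∉ S := by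
  obtain ⟨S, hS, hcard⟩ := exists_isMaxStable (square G)
  rw [← hsq] at hcard
  by_cases hv : v ∈ S
  · obtain ⟨w, hvw⟩ := hG v
    have hw : w ∉ S := fun hw => hS hv hw ⟨hvw.ne, Or.inl hvw⟩
    refine ⟨insert w (S.erase v), ⟨hS.insert_erase_of_adj hv hvw, ?_⟩, ?_⟩
    · rw [Finset.card_insert_of_notMem (fun h => hw (Finset.mem_of_mem_erase h)),
        Finset.card_erase_add_one hv, hcard]
    · simp [hvw.ne]
  · exact ⟨S, ⟨hS.anti (le_square G), hcard⟩, hv⟩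

lemma IsMaxStable.alpha_sup_edge_eq {S : Finset V} (hS : IsMaxStable G S) {u : V} (hu : u ∉ S)
    (v : V) : alpha (G ⊔ fromEdgeSet {s(u, v)}) = alpha G := by
  refine le_antisymm (alpha_anti le_sup_left) (hS.2 ▸ IsStable.card_le_alpha ?_)
  rintro a ha b hb (hab | ⟨hab, -⟩)
  · exact hS.1 ha hb hab
  · rcases Sym2.eq_iff.mp (Set.mem_singleton_iff.mp hab) with ⟨rfl, -⟩ | ⟨-, rfl⟩
    · exact hu ha
    · exact hu hb

end Fintype

/-- Every square-stable graph is α⁺-stable; moreover the intersection of all its maximum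
stable sets is empty (it is α₀⁺-stable). -/
theorem stmt12 [Fintype V] (G : SimpleGraph V) (hc : G.Connected)
    (hcard : 2 ≤ Fintype.card V) (h : SquareStable G) :
    (∀ u v : V, u ≠ v → ¬ G.Adj u v →
        alpha (G ⊔ fromEdgeSet {s(u, v)}) = alpha G) ∧
    (∀ v : V, ∃ S : Finset V, IsMaxStable G S ∧ v ∉ S) := by
  have : Nontrivial V := Fintype.one_lt_card_iff_nontrivial.mp hcard
  have hmiss := h.exists_isMaxStable_notMem hc.preconnected.exists_adj_of_nontrivial
  refine ⟨fun u v _ _ => ?_, hmiss⟩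
  obtain ⟨S, hS, hu⟩ := hmiss u
  exact hS.alpha_sup_edge_eq hu v
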